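/- Let G = (V⁺, V⁻; E) be a simple bipartite graph with edge weights w : E → ℝ and let μ be a matching in G of size k. If μ has minimum weight among all matchings of size k in G, then the auxiliary weighted graph (G_μ, w_μ) contains no directed cycle of negative weight. Moreover, when |V⁺| = |V⁻| = k (so μ is a perfect matching), the converse also holds: μ is a minimum-weight perfect matching in (G, w) if and only if (G_μ, w_μ) has no negative cycle. -/

import Mathlib

/-!  Common setup: weighted bipartite graphs `G = (V⁺, V⁻; E)` with `V⁺ = α`, `V⁻ = β`,
edges directed from `V⁺` to `V⁻`, auxiliary graphs of matchings, walks and cycles. -/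

variable {α β : Type*}

/-- Directed adjacency of the auxiliary graph `G_μ`: non-matching edges go from `V⁺` to `V⁻`,
matching edges are reversed. -/
def auxAdj (E μ : Finset (α × β)) : α ⊕ β → α ⊕ β → Prop
  | Sum.inl u, Sum.inr v => (u, v) ∈ E ∧ (u, v) ∉ μ
  | Sum.inr v, Sum.inl u => (u, v) ∈ μ
  | _, _ => False

/-- The auxiliary weight `w_μ`, as a function on pairs of vertices. -/
def auxW (w : α × β → ℝ) : α ⊕ β → α ⊕ β → ℝ
  | Sum.inl u, Sum.inr v => w (u, v)
  | Sum.inr v, Sum.inl u => - w (u, v)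
  | _, _ => 0

/-- Weight of a walk, given by its list of vertices. -/
def walkWeight {V : Type*} (W : V → V → ℝ) (l : List V) : ℝ :=
  ((l.zip l.tail).map fun p => W p.1 p.2).sum

/-- A (simple) directed path from `s` to `t`, given by its list of vertices. -/
def IsDiPath {V : Type*} (adj : V → V → Prop) (s t : V) (l : List V) : Prop :=
  l.head? = some s ∧ l.getLast? = some t ∧ l.Chain' adj ∧ l.Nodup

/-- A (simple) directed cycle, given by the list of its vertices (the closing edge
from the last vertex back to the first is implicit). -/
def IsDiCycle {V : Type*} (adj : V → V → Prop) (l : List V) : Prop :=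
  l ≠ [] ∧ l.Nodup ∧ (l ++ l.take 1).Chain' adj

/-- Total auxiliary weight of a directed cycle (including the closing edge). -/
def cycleWeight {V : Type*} (W : V → V → ℝ) (l : List V) : ℝ :=
  walkWeight W (l ++ l.take 1)

/-- The underlying undirected edge of a dart of the auxiliary graph. -/
def undEdge : (α ⊕ β) × (α ⊕ β) → Option (α × β)
  | (Sum.inl u, Sum.inr v) => some (u, v)
  | (Sum.inr v, Sum.inl u) => some (u, v)
  | _ => none

/-- The set of underlying edges of `G` used by a walk in the auxiliary graph. -/
def usedEdges [DecidableEq α] [DecidableEq β] (l : List (α ⊕ β)) : Finset (α × β) :=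
  ((l.zip l.tail).filterMap undEdge).toFinset

/-- An edge set is a matching if every vertex appears at most once. -/
def IsMatching (μ : Finset (α × β)) : Prop :=
  ∀ e ∈ μ, ∀ f ∈ μ, (e.1 = f.1 ∨ e.2 = f.2) → e = f

/-- A perfect matching: a matching contained in `E` covering every vertex. -/
def IsPerfectMatching (E μ : Finset (α × β)) : Prop :=
  μ ⊆ E ∧ IsMatching μ ∧ (∀ u : α, ∃ v : β, (u, v) ∈ μ) ∧ (∀ v : β, ∃ u : α, (u, v) ∈ μ)

/-- The weight of a matching. -/
def matchingWeight (w : α × β → ℝ) (μ : Finset (α × β)) : ℝ := ∑ e ∈ μ, w e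

/-- A minimum-weight perfect matching. -/
def IsMinPerfectMatching (E : Finset (α × β)) (w : α × β → ℝ) (μ : Finset (α × β)) : Prop :=
  IsPerfectMatching E μ ∧
    ∀ ν : Finset (α × β), IsPerfectMatching E ν → matchingWeight w μ ≤ matchingWeight w ν

/-- `p` is a potential for `(G_μ, w_μ)`: all reduced weights are nonnegative. -/
def IsPotential (E μ : Finset (α × β)) (w : α × β → ℝ) (p : α ⊕ β → ℝ) : Prop :=
  ∀ x y : α ⊕ β, auxAdj E μ x y → auxW w x y + p x - p y ≥ 0

/-! If `C` is a cycle of `G_μ`, then `μ ∆ E(C)` is again a matching of the same size: along `C`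
every vertex trades its matching edge for a forward arc. Its weight is `w(μ) + w_μ(C)`, so a
negative cycle contradicts minimality. Conversely, without negative cycles the least weights `p`
of simple paths form a potential; the reduced weights `w(u, v) + p u - p v` are then `≥ 0` off `μ`
and `≤ 0` on `μ`, and on every perfect matching they sum to its weight plus one and the same
constant, so `μ` is a minimum perfect matching. -/

open scoped symmDiff

section Walks

variable {V : Type*}

@[simp]
lemma walkWeight_singleton (W : V → V → ℝ) (x : V) : walkWeight W [x] = 0 := rfl

@[simp]
lemma walkWeight_cons_cons (W : V → V → ℝ) (x y : V) (l : List V) :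
    walkWeight W (x :: y :: l) = W x y + walkWeight W (y :: l) := by
  simp [walkWeight]

lemma walkWeight_append_cons (W : V → V → ℝ) (l₁ : List V) (x : V) (l₂ : List V) :
    walkWeight W (l₁ ++ x :: l₂) = walkWeight W (l₁ ++ [x]) + walkWeight W (x :: l₂) := by
  induction l₁ with
  | nil => simp
  | cons a l₁ ih =>
    cases l₁ with
    | nil => simp
    | cons b l₁ => simp only [List.cons_append, walkWeight_cons_cons] at ih ⊢; rw [ih]; ring

lemma walkWeight_concat (W : V → V → ℝ) {l : List V} {x : V} (hx : l.getLast? = some x) (y : V) :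
    walkWeight W (l ++ [y]) = walkWeight W l + W x y := by
  obtain ⟨l', rfl⟩ := List.getLast?_eq_some_iff.mp hx
  rw [List.append_assoc, List.singleton_append, walkWeight_append_cons]
  simp

lemma walkWeight_sub_eq_sub (q : V → ℝ) {l : List V} {a b : V} (ha : l.head? = some a)
    (hb : l.getLast? = some b) : walkWeight (fun x y => q y - q x) l = q b - q a := by
  induction l generalizing a with
  | nil => simp at ha
  | cons x l ih =>
    obtain rfl : x = a := by simpa using ha
    cases l with
    | nil => simp_all
    | cons y l =>
      rw [walkWeight_cons_cons, ih rfl (by simpa using hb)]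
      ring

lemma cycleWeight_sub_eq_zero (q : V → ℝ) (l : List V) :
    cycleWeight (fun x y => q y - q x) l = 0 := by
  cases l with
  | nil => rfl
  | cons c l =>
    simpa [cycleWeight] using walkWeight_sub_eq_sub q (l := c :: l ++ [c]) rfl List.getLast?_concat

end Walks

section Potential

variable {V : Type*} {adj : V → V → Prop} {W : V → V → ℝ} {s x y : V}

lemma IsDiPath.concat {l : List V} (hl : IsDiPath adj s x l) (hy : y ∉ l) (hxy : adj x y) :
    IsDiPath adj s y (l ++ [y]) := by
  obtain ⟨hs, hx, hch, hnd⟩ := hl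
  refine ⟨by simp [List.head?_append, hs], List.getLast?_concat, ?_,
    List.concat_eq_append .. ▸ hnd.concat hy⟩
  exact hch.append (List.isChain_singleton y) (by simp [hx, hxy])

lemma IsDiPath.prefix {l₁ l₂ : List V} (hl : IsDiPath adj s x (l₁ ++ y :: l₂)) :
    IsDiPath adj s y (l₁ ++ [y]) := by
  obtain ⟨hs, -, hch, hnd⟩ := hl
  have hpre : l₁ ++ [y] <+: l₁ ++ y :: l₂ := by simp
  refine ⟨by simpa [List.head?_append] using hs, List.getLast?_concat, hch.prefix hpre,
    hnd.sublist hpre.sublist⟩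

lemma IsDiPath.isDiCycle_suffix {l₁ l₂ : List V} (hl : IsDiPath adj s x (l₁ ++ y :: l₂))
    (hxy : adj x y) : IsDiCycle adj (y :: l₂) := by
  obtain ⟨-, hx, hch, hnd⟩ := hl
  have hsuf : y :: l₂ <:+ l₁ ++ y :: l₂ := List.suffix_append _ _
  have hx' : (y :: l₂).getLast? = some x := by simpa [List.getLast?_append] using hx
  refine ⟨List.cons_ne_nil _ _, hnd.sublist hsuf.sublist, ?_⟩
  exact (hch.suffix hsuf).append (List.isChain_singleton y) (by simp [hx', hxy])

lemma IsDiPath.exists_weight_le (hW : ∀ C, IsDiCycle adj C → 0 ≤ cycleWeight W C) {l : List V}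
    (hl : IsDiPath adj s x l) (hxy : adj x y) :
    ∃ l', IsDiPath adj s y l' ∧ walkWeight W l' ≤ walkWeight W l + W x y := by
  by_cases hy : y ∈ l
  · obtain ⟨l₁, l₂, rfl⟩ := List.append_of_mem hy
    have hx : (y :: l₂).getLast? = some x := by simpa [List.getLast?_append] using hl.2.1
    have hcycle : 0 ≤ walkWeight W (y :: l₂ ++ [y]) := hW _ (hl.isDiCycle_suffix hxy)
    rw [walkWeight_concat W hx] at hcycle
    refine ⟨l₁ ++ [y], hl.prefix, ?_⟩
    rw [walkWeight_append_cons W l₁ y l₂]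
    linarith
  · exact ⟨l ++ [y], hl.concat hy hxy, (walkWeight_concat W hl.2.1 y).le⟩

theorem exists_potential_of_cycleWeight_nonneg [Fintype V]
    (hW : ∀ C, IsDiCycle adj C → 0 ≤ cycleWeight W C) :
    ∃ p : V → ℝ, ∀ x y, adj x y → p y ≤ p x + W x y := by
  have hnodup : {l : List V | l.Nodup}.Finite :=
    Set.finite_coe_iff.mp (inferInstanceAs (Finite {l : List V // l.Nodup}))
  have hfin (x : V) : {l | ∃ s, IsDiPath adj s x l}.Finite :=
    hnodup.subset fun _ ⟨_, hl⟩ => hl.2.2.2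
  choose l hl hmin using fun x => Set.exists_min_image _ (walkWeight W) (hfin x)
    ⟨[x], x, rfl, rfl, List.isChain_singleton x, List.nodup_singleton x⟩
  refine ⟨fun x => walkWeight W (l x), fun x y hxy => ?_⟩
  obtain ⟨s, hs⟩ := hl x
  obtain ⟨l', hl', hle⟩ := hs.exists_weight_le hW hxy
  exact (hmin y l' ⟨s, hl'⟩).trans hle

end Potential

section CycleDarts

variable {V : Type*} {l : List V} {x : V}

def cycleDarts (l : List V) : List (V × V) :=
  (l ++ l.take 1).zip (l ++ l.take 1).tail

lemma cycleDarts_eq_zip_rotate (l : List V) : cycleDarts l = l.zip (l.rotate 1) := by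
  cases l with
  | nil => rfl
  | cons c l =>
    simpa [cycleDarts] using List.zip_append (l₁ := c :: l) (r₁ := [c]) (r₂ := []) (by simp)

lemma map_fst_cycleDarts (l : List V) : (cycleDarts l).map Prod.fst = l := by
  rw [cycleDarts_eq_zip_rotate, List.map_fst_zip (by simp)]

lemma map_snd_cycleDarts (l : List V) : (cycleDarts l).map Prod.snd = l.rotate 1 := by
  rw [cycleDarts_eq_zip_rotate, List.map_snd_zip (by simp)]

lemma cycleWeight_eq_sum_cycleDarts (W : V → V → ℝ) (l : List V) :
    cycleWeight W l = ((cycleDarts l).map fun d => W d.1 d.2).sum := rfl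

lemma IsDiCycle.rel_of_mem_cycleDarts {adj : V → V → Prop} {l : List V} (hl : IsDiCycle adj l)
    {d : V × V} (hd : d ∈ cycleDarts l) : adj d.1 d.2 := by
  obtain ⟨c, l, rfl⟩ := List.exists_cons_of_ne_nil hl.1
  have := List.isChain_cons_append_singleton_iff_forall₂.mp hl.2.2
  rw [cycleDarts_eq_zip_rotate] at hd
  exact List.forall₂_zip this (by simpa using hd)

lemma fst_mem_of_mem_cycleDarts {d : V × V} (hd : d ∈ cycleDarts l) : d.1 ∈ l :=
  map_fst_cycleDarts l ▸ List.mem_map_of_mem hd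

lemma snd_mem_of_mem_cycleDarts {d : V × V} (hd : d ∈ cycleDarts l) : d.2 ∈ l :=
  (List.mem_rotate (n := 1)).mp (map_snd_cycleDarts l ▸ List.mem_map_of_mem hd)

lemma exists_mem_cycleDarts_fst_eq (hx : x ∈ l) : ∃ y, (x, y) ∈ cycleDarts l := by
  rw [← map_fst_cycleDarts l] at hx
  obtain ⟨⟨x, y⟩, hd, rfl⟩ := List.mem_map.mp hx
  exact ⟨y, hd⟩

lemma exists_mem_cycleDarts_snd_eq (hx : x ∈ l) : ∃ y, (y, x) ∈ cycleDarts l := by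
  rw [← List.mem_rotate (n := 1), ← map_snd_cycleDarts l] at hx
  obtain ⟨⟨y, x⟩, hd, rfl⟩ := List.mem_map.mp hx
  exact ⟨y, hd⟩

lemma eq_of_mem_cycleDarts_of_fst_eq (hl : l.Nodup) {d d' : V × V}
    (hd : d ∈ cycleDarts l) (hd' : d' ∈ cycleDarts l) (h : d.1 = d'.1) : d = d' :=
  List.inj_on_of_nodup_map (by rwa [map_fst_cycleDarts]) hd hd' h

lemma eq_of_mem_cycleDarts_of_snd_eq (hl : l.Nodup) {d d' : V × V}
    (hd : d ∈ cycleDarts l) (hd' : d' ∈ cycleDarts l) (h : d.2 = d'.2) : d = d' :=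
  List.inj_on_of_nodup_map (by rwa [map_snd_cycleDarts, List.nodup_rotate]) hd hd' h

end CycleDarts

section Matchings

variable {E μ ν : Finset (α × β)}

lemma IsMatching.injOn_fst (hμ : IsMatching μ) : Set.InjOn Prod.fst (μ : Set (α × β)) :=
  fun e he f hf h => hμ e he f hf (Or.inl h)

lemma IsMatching.injOn_snd (hμ : IsMatching μ) : Set.InjOn Prod.snd (μ : Set (α × β)) :=
  fun e he f hf h => hμ e he f hf (Or.inr h)

lemma IsMatching.isPerfectMatching_of_card [Fintype α] [Fintype β] (hν : IsMatching ν)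
    (hνE : ν ⊆ E) (hα : Fintype.card α = ν.card) (hβ : Fintype.card β = ν.card) :
    IsPerfectMatching E ν := by
  refine ⟨hνE, hν, fun u => ?_, fun v => ?_⟩
  · obtain ⟨e, he, rfl⟩ := Finset.surj_on_of_inj_on_of_card_le (fun e _ => e.1)
      (fun _ _ => Finset.mem_univ _) (fun _ _ he hf h => hν.injOn_fst he hf h)
      (by simp [hα]) u (Finset.mem_univ u)
    exact ⟨e.2, he⟩
  · obtain ⟨e, he, rfl⟩ := Finset.surj_on_of_inj_on_of_card_le (fun e _ => e.2)
      (fun _ _ => Finset.mem_univ _) (fun _ _ he hf h => hν.injOn_snd he hf h)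
      (by simp [hβ]) v (Finset.mem_univ v)
    exact ⟨e.1, he⟩

lemma IsPerfectMatching.sum_fst [Fintype α] {M : Type*} [AddCommMonoid M]
    (hν : IsPerfectMatching E ν) (g : α → M) : ∑ e ∈ ν, g e.1 = ∑ u, g u :=
  Finset.sum_nbij Prod.fst (fun _ _ => Finset.mem_univ _) hν.2.1.injOn_fst
    (fun u _ => let ⟨v, hv⟩ := hν.2.2.1 u; ⟨(u, v), hv, rfl⟩) fun _ _ => rfl

lemma IsPerfectMatching.sum_snd [Fintype β] {M : Type*} [AddCommMonoid M]
    (hν : IsPerfectMatching E ν) (g : β → M) : ∑ e ∈ ν, g e.2 = ∑ v, g v :=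
  Finset.sum_nbij Prod.snd (fun _ _ => Finset.mem_univ _) hν.2.1.injOn_snd
    (fun v _ => let ⟨u, hu⟩ := hν.2.2.2 v; ⟨(u, v), hu, rfl⟩) fun _ _ => rfl

theorem IsPotential.matchingWeight_le [Fintype α] [Fintype β] {w : α × β → ℝ} {p : α ⊕ β → ℝ}
    (hp : IsPotential E μ w p) (hμ : IsPerfectMatching E μ) (hν : IsPerfectMatching E ν) :
    matchingWeight w μ ≤ matchingWeight w ν := by
  classical
  set r : α × β → ℝ := fun e => w e + p (Sum.inl e.1) - p (Sum.inr e.2)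
  have hsum {ρ} (hρ : IsPerfectMatching E ρ) : ∑ e ∈ ρ, r e =
      matchingWeight w ρ + (∑ u, p (Sum.inl u) - ∑ v, p (Sum.inr v)) := by
    simp only [r, Finset.sum_sub_distrib, Finset.sum_add_distrib, matchingWeight,
      hρ.sum_fst fun u => p (Sum.inl u), hρ.sum_snd fun v => p (Sum.inr v)]
    ring
  have hfwd : ∀ e ∈ ν \ μ, 0 ≤ r e := fun e he => by
    rw [Finset.mem_sdiff] at he
    have := hp (Sum.inl e.1) (Sum.inr e.2) (by simpa [auxAdj] using ⟨hν.1 he.1, he.2⟩)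
    simp only [auxW] at this
    linarith
  have hbwd : ∀ e ∈ μ \ ν, r e ≤ 0 := fun e he => by
    have := hp (Sum.inr e.2) (Sum.inl e.1) (by simpa [auxAdj] using (Finset.mem_sdiff.mp he).1)
    simp only [auxW] at this
    linarith
  have hdiff := Finset.sum_sdiff_sub_sum_sdiff (s₁ := μ) (s₂ := ν) (f := r)
  rw [hsum hν, hsum hμ] at hdiff
  linarith [Finset.sum_nonneg hfwd, Finset.sum_nonpos hbwd]

end Matchings

lemma Finset.sum_symmDiff_eq_add {ι M : Type*} [DecidableEq ι] [AddCommGroup M] (s t : Finset ι)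
    (f : ι → M) : ∑ i ∈ s ∆ t, f i = ∑ i ∈ s, f i + ∑ i ∈ t, if i ∈ s then -f i else f i := by
  rw [symmDiff_def, Finset.sup_eq_union, Finset.sum_union disjoint_sdiff_sdiff, Finset.sum_ite,
    Finset.filter_mem_eq_inter, Finset.filter_notMem_eq_sdiff, Finset.sum_neg_distrib,
    ← Finset.sum_inter_add_sum_sdiff s t, Finset.inter_comm]
  abel

section Toggle

variable {E μ : Finset (α × β)} {C : List (α ⊕ β)}

lemma eq_of_auxAdj_of_undEdge_eq {d d' : (α ⊕ β) × (α ⊕ β)} (hd : auxAdj E μ d.1 d.2)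
    (hd' : auxAdj E μ d'.1 d'.2) (h : undEdge d = undEdge d') : d = d' := by
  obtain ⟨x | x, y | y⟩ := d <;> obtain ⟨x' | x', y' | y'⟩ := d' <;>
    simp_all [auxAdj, undEdge]

lemma auxW_one : auxW (fun _ => (1 : ℝ)) = fun x y : α ⊕ β =>
    Sum.elim (0 : α → ℝ) (1 : β → ℝ) y - Sum.elim (0 : α → ℝ) (1 : β → ℝ) x := by
  ext (x | x) (y | y) <;> simp [auxW]

lemma IsDiCycle.exists_bwd_of_fwd (hC : IsDiCycle (auxAdj E μ) C) {u : α} {v : β}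
    (h : (Sum.inl u, Sum.inr v) ∈ cycleDarts C) :
    (∃ v', (Sum.inr v', Sum.inl u) ∈ cycleDarts C) ∧
      ∃ u', (Sum.inr v, Sum.inl u') ∈ cycleDarts C := by
  obtain ⟨x, hx⟩ := exists_mem_cycleDarts_snd_eq (fst_mem_of_mem_cycleDarts h)
  obtain ⟨y, hy⟩ := exists_mem_cycleDarts_fst_eq (snd_mem_of_mem_cycleDarts h)
  rcases x with x | v'
  · exact (hC.rel_of_mem_cycleDarts hx).elim
  rcases y with u' | y
  · exact ⟨⟨v', hx⟩, u', hy⟩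
  · exact (hC.rel_of_mem_cycleDarts hy).elim

lemma nodup_filterMap_undEdge {D : List ((α ⊕ β) × (α ⊕ β))}
    (hD : ∀ d ∈ D, auxAdj E μ d.1 d.2) (hnd : D.Nodup) : (D.filterMap undEdge).Nodup :=
  List.pairwise_filterMap.mpr <| hnd.imp_of_mem fun ha hb hne _ he _ he' heq =>
    hne (eq_of_auxAdj_of_undEdge_eq (hD _ ha) (hD _ hb)
      (by rw [Option.mem_def.mp he, Option.mem_def.mp he', heq]))

variable [DecidableEq α] [DecidableEq β]

lemma usedEdges_append_take_one (l : List (α ⊕ β)) :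
    usedEdges (l ++ l.take 1) = ((cycleDarts l).filterMap undEdge).toFinset := rfl

lemma exists_undEdge_and_auxW_eq_of_auxAdj {x y : α ⊕ β} (h : auxAdj E μ x y) (w : α × β → ℝ) :
    ∃ e, undEdge (x, y) = some e ∧ auxW w x y = if e ∈ μ then -w e else w e := by
  rcases x with u | v <;> rcases y with u' | v' <;> simp_all [auxAdj, undEdge, auxW]

lemma sum_map_auxW_eq {D : List ((α ⊕ β) × (α ⊕ β))} (hD : ∀ d ∈ D, auxAdj E μ d.1 d.2)
    (w : α × β → ℝ) : (D.map fun d => auxW w d.1 d.2).sum =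
      ((D.filterMap undEdge).map fun e => if e ∈ μ then -w e else w e).sum := by
  induction D with
  | nil => rfl
  | cons d D ih =>
    obtain ⟨e, he, hw⟩ := exists_undEdge_and_auxW_eq_of_auxAdj (hD d List.mem_cons_self) w
    rw [List.filterMap_cons_some he, List.map_cons, List.map_cons, List.sum_cons, List.sum_cons,
      hw, ih fun d hd => hD d (List.mem_cons_of_mem _ hd)]

lemma IsDiCycle.cycleWeight_auxW_eq (hC : IsDiCycle (auxAdj E μ) C) (w : α × β → ℝ) :
    cycleWeight (auxW w) C = ∑ e ∈ usedEdges (C ++ C.take 1), if e ∈ μ then -w e else w e := by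
  have hadj : ∀ d ∈ cycleDarts C, auxAdj E μ d.1 d.2 := fun _ => hC.rel_of_mem_cycleDarts
  have hnd : (cycleDarts C).Nodup :=
    List.Nodup.of_map Prod.fst (by rw [map_fst_cycleDarts]; exact hC.2.1)
  rw [cycleWeight_eq_sum_cycleDarts, sum_map_auxW_eq hadj, usedEdges_append_take_one,
    List.sum_toFinset _ (nodup_filterMap_undEdge hadj hnd)]

lemma IsDiCycle.matchingWeight_symmDiff (hC : IsDiCycle (auxAdj E μ) C) (w : α × β → ℝ) :
    matchingWeight w (μ ∆ usedEdges (C ++ C.take 1)) =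
      matchingWeight w μ + cycleWeight (auxW w) C := by
  rw [hC.cycleWeight_auxW_eq, matchingWeight, matchingWeight, Finset.sum_symmDiff_eq_add]

/-- Toggling preserves the size because `w_μ` for `w ≡ 1` is the coboundary of the indicator
of `V⁻`, so every cycle has as many arcs out of `V⁺` as into it. -/
lemma IsDiCycle.card_symmDiff (hC : IsDiCycle (auxAdj E μ) C) :
    (μ ∆ usedEdges (C ++ C.take 1)).card = μ.card := by
  have := hC.matchingWeight_symmDiff fun _ => 1
  rw [auxW_one, cycleWeight_sub_eq_zero] at this
  simpa [matchingWeight] using this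

lemma IsDiCycle.mem_and_mem_usedEdges_of_bwd (hC : IsDiCycle (auxAdj E μ) C) {u : α} {v : β}
    (h : (Sum.inr v, Sum.inl u) ∈ cycleDarts C) :
    (u, v) ∈ μ ∧ (u, v) ∈ usedEdges (C ++ C.take 1) :=
  ⟨hC.rel_of_mem_cycleDarts h, List.mem_toFinset.mpr (List.mem_filterMap.mpr ⟨_, h, rfl⟩)⟩

lemma IsDiCycle.fwd_mem_cycleDarts (hC : IsDiCycle (auxAdj E μ) C) {e : α × β}
    (he : e ∈ usedEdges (C ++ C.take 1)) (heμ : e ∉ μ) :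
    (Sum.inl e.1, Sum.inr e.2) ∈ cycleDarts C := by
  obtain ⟨d, hd, hde⟩ := List.mem_filterMap.mp (List.mem_toFinset.mp he)
  obtain ⟨x | x, y | y⟩ := d <;> simp only [undEdge, reduceCtorEq, Option.some.injEq] at hde <;>
    subst hde
  · exact hd
  · exact absurd (hC.rel_of_mem_cycleDarts hd) heμ

lemma IsDiCycle.symmDiff_subset (hC : IsDiCycle (auxAdj E μ) C) (hμE : μ ⊆ E) :
    μ ∆ usedEdges (C ++ C.take 1) ⊆ E := by
  intro e he
  rcases Finset.mem_symmDiff.mp he with ⟨he, -⟩ | ⟨he, heμ⟩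
  · exact hμE he
  · exact (hC.rel_of_mem_cycleDarts (hC.fwd_mem_cycleDarts he heμ)).1

lemma IsDiCycle.isMatching_symmDiff (hC : IsDiCycle (auxAdj E μ) C) (hμ : IsMatching μ) :
    IsMatching (μ ∆ usedEdges (C ++ C.take 1)) := by
  set U := usedEdges (C ++ C.take 1)
  -- Every vertex of `C` carries a matching edge of `C`, so an untouched matching edge avoids `C`.
  have hsep : ∀ e ∈ μ, e ∉ U → ∀ f ∈ U, f ∉ μ → ¬(e.1 = f.1 ∨ e.2 = f.2) := by
    intro e he heU f hf hfμ hef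
    obtain ⟨⟨v', hv'⟩, u', hu'⟩ := hC.exists_bwd_of_fwd (hC.fwd_mem_cycleDarts hf hfμ)
    rcases hef with h | h
    · obtain ⟨hg, hgU⟩ := hC.mem_and_mem_usedEdges_of_bwd hv'
      exact heU (hμ e he _ hg (Or.inl h) ▸ hgU)
    · obtain ⟨hg, hgU⟩ := hC.mem_and_mem_usedEdges_of_bwd hu'
      exact heU (hμ e he _ hg (Or.inr h) ▸ hgU)
  have hnew : ∀ e ∈ U, e ∉ μ → ∀ f ∈ U, f ∉ μ → (e.1 = f.1 ∨ e.2 = f.2) → e = f := by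
    intro e he heμ f hf hfμ hef
    have hd := hC.fwd_mem_cycleDarts he heμ
    have hd' := hC.fwd_mem_cycleDarts hf hfμ
    have := hef.elim (fun h => eq_of_mem_cycleDarts_of_fst_eq hC.2.1 hd hd' (by simp [h]))
      (fun h => eq_of_mem_cycleDarts_of_snd_eq hC.2.1 hd hd' (by simp [h]))
    simpa [Prod.ext_iff] using this
  intro e he f hf hef
  rcases Finset.mem_symmDiff.mp he with ⟨he, heU⟩ | ⟨he, heμ⟩ <;>
    rcases Finset.mem_symmDiff.mp hf with ⟨hf, hfU⟩ | ⟨hf, hfμ⟩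
  · exact hμ e he f hf hef
  · exact (hsep e he heU f hf hfμ hef).elim
  · exact (hsep f hf hfU e he heμ (hef.imp Eq.symm Eq.symm)).elim
  · exact hnew e he heμ f hf hfμ hef

end Toggle

theorem cycleWeight_nonneg_of_forall_card_eq_le {E μ : Finset (α × β)} {w : α × β → ℝ}
    (hμE : μ ⊆ E) (hμ : IsMatching μ)
    (hmin : ∀ ν ⊆ E, IsMatching ν → ν.card = μ.card → matchingWeight w μ ≤ matchingWeight w ν)
    (C : List (α ⊕ β)) (hC : IsDiCycle (auxAdj E μ) C) : 0 ≤ cycleWeight (auxW w) C := by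
  classical
  have := hmin _ (hC.symmDiff_subset hμE) (hC.isMatching_symmDiff hμ) hC.card_symmDiff
  rw [hC.matchingWeight_symmDiff] at this
  linarith

theorem exists_isPotential_of_cycleWeight_nonneg [Fintype α] [Fintype β]
    {E μ : Finset (α × β)} {w : α × β → ℝ}
    (h : ∀ C : List (α ⊕ β), IsDiCycle (auxAdj E μ) C → 0 ≤ cycleWeight (auxW w) C) :
    ∃ p, IsPotential E μ w p := by
  obtain ⟨p, hp⟩ := exists_potential_of_cycleWeight_nonneg h
  exact ⟨p, fun x y hxy => by linarith [hp x y hxy]⟩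

theorem min_matching_no_negative_cycle_general
    [Fintype α] [Fintype β]
    (E μ : Finset (α × β)) (w : α × β → ℝ) (k : ℕ)
    (hμE : μ ⊆ E) (hμ : IsMatching μ) (hcard : μ.card = k) :
    ((∀ ν ⊆ E, IsMatching ν → ν.card = k → matchingWeight w μ ≤ matchingWeight w ν) →
      ∀ C : List (α ⊕ β), IsDiCycle (auxAdj E μ) C → 0 ≤ cycleWeight (auxW w) C) ∧
    (Fintype.card α = k → Fintype.card β = k →
      ((∀ ν : Finset (α × β), IsPerfectMatching E ν →
          matchingWeight w μ ≤ matchingWeight w ν) ↔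
        ∀ C : List (α ⊕ β), IsDiCycle (auxAdj E μ) C → 0 ≤ cycleWeight (auxW w) C)) := by
  subst hcard
  refine ⟨cycleWeight_nonneg_of_forall_card_eq_le hμE hμ,
    fun hα hβ => ⟨fun hmin => ?_, fun h => ?_⟩⟩
  · refine cycleWeight_nonneg_of_forall_card_eq_le hμE hμ fun ν hνE hν hνcard => hmin ν ?_
    exact hν.isPerfectMatching_of_card hνE (hνcard ▸ hα) (hνcard ▸ hβ)
  · obtain ⟨p, hp⟩ := exists_isPotential_of_cycleWeight_nonneg h
    exact fun ν hν => hp.matchingWeight_le (hμ.isPerfectMatching_of_card hμE hα hβ) hν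

/-- If `μ` is a matching of size `k` of minimum weight among all matchings
of size `k` in `G`, then `(G_μ, w_μ)` has no negative cycle. Moreover, when
`|V⁺| = |V⁻| = k` (so `μ` is a perfect matching), `μ` is a minimum-weight perfect matching
if and only if `(G_μ, w_μ)` has no negative cycle. -/
theorem min_matching_no_negative_cycle
    [Fintype α] [Fintype β] [DecidableEq α] [DecidableEq β]
    (E μ : Finset (α × β)) (w : α × β → ℝ) (k : ℕ)
    (hμE : μ ⊆ E) (hμ : IsMatching μ) (hcard : μ.card = k) :
    ((∀ ν ⊆ E, IsMatching ν → ν.card = k → matchingWeight w μ ≤ matchingWeight w ν) →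
      ∀ C : List (α ⊕ β), IsDiCycle (auxAdj E μ) C → 0 ≤ cycleWeight (auxW w) C) ∧
    (Fintype.card α = k → Fintype.card β = k →
      ((∀ ν : Finset (α × β), IsPerfectMatching E ν →
          matchingWeight w μ ≤ matchingWeight w ν) ↔
        ∀ C : List (α ⊕ β), IsDiCycle (auxAdj E μ) C → 0 ≤ cycleWeight (auxW w) C)) :=
  min_matching_no_negative_cycle_general E μ w k hμE hμ hcard
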